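/- Let x: U → ℝ³ be a non-parabolic frontal with tangent moving basis Ω = (w₁ w₂), let ξ: U → ℝ³ be an equiaffine transversal vector field, and let ν: U → ℝ³∖{0} be the affine conormal vector field of x relative to ξ (i.e. ⟨ν, ξ⟩ = 1 and ⟨ν, w₁⟩ = ⟨ν, w₂⟩ = 0). Then ν is an immersion: Dν(q) has rank 2 for every q ∈ U (equivalently, ν_{u₁}(q) and ν_{u₂}(q) are linearly independent for all q). -/

import Mathlib

open Matrix Topology Filter

noncomputable section

/-- Vectors in ℝ³. -/
abbrev V3 : Type := Fin 3 → ℝ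

/-- The Euclidean dot product on ℝ³. -/
def dot3 (v w : V3) : ℝ := v 0 * w 0 + v 1 * w 1 + v 2 * w 2

/-- The cross product on ℝ³. -/
def cross3 (v w : V3) : V3 :=
  ![v 1 * w 2 - v 2 * w 1, v 2 * w 0 - v 0 * w 2, v 0 * w 1 - v 1 * w 0]

/-- Partial derivative in the `u₁` direction. -/
def pd1 {E : Type*} [NormedAddCommGroup E] [NormedSpace ℝ E]
    (f : ℝ × ℝ → E) (q : ℝ × ℝ) : E := fderiv ℝ f q (1, 0)

/-- Partial derivative in the `u₂` direction. -/
def pd2 {E : Type*} [NormedAddCommGroup E] [NormedSpace ℝ E]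
    (f : ℝ × ℝ → E) (q : ℝ × ℝ) : E := fderiv ℝ f q (0, 1)

/-- The singular set `Σ(x)` of `x` on `U`. -/
def SingSet (x : ℝ × ℝ → V3) (U : Set (ℝ × ℝ)) : Set (ℝ × ℝ) :=
  {q ∈ U | ¬ LinearIndependent ℝ ![pd1 x q, pd2 x q]}

/-- `x` is a frontal on the open set `U`, with smooth unit normal field `n`. -/
def IsFrontal (x n : ℝ × ℝ → V3) (U : Set (ℝ × ℝ)) : Prop :=
  IsOpen U ∧ ContDiffOn ℝ (⊤ : ℕ∞) x U ∧ ContDiffOn ℝ (⊤ : ℕ∞) n U ∧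
  (∀ q ∈ U, dot3 (n q) (n q) = 1) ∧
  (∀ q ∈ U, dot3 (pd1 x q) (n q) = 0 ∧ dot3 (pd2 x q) (n q) = 0)

/-- `x` is proper: its singular set has empty interior. -/
def IsProper (x : ℝ × ℝ → V3) (U : Set (ℝ × ℝ)) : Prop :=
  interior (SingSet x U) = ∅

/-- `(w1 w2)` is a tangent moving basis of `x` on `U`. -/
def IsTMB (x w1 w2 : ℝ × ℝ → V3) (U : Set (ℝ × ℝ)) : Prop :=
  ContDiffOn ℝ (⊤ : ℕ∞) w1 U ∧ ContDiffOn ℝ (⊤ : ℕ∞) w2 U ∧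
  (∀ q ∈ U, LinearIndependent ℝ ![w1 q, w2 q]) ∧
  (∀ q ∈ U, pd1 x q ∈ Submodule.span ℝ {w1 q, w2 q} ∧
            pd2 x q ∈ Submodule.span ℝ {w1 q, w2 q})

/-- The unit normal induced by a tangent moving basis: `w₁ × w₂ / ‖w₁ × w₂‖`. -/
def inducedNormal (w1 w2 : ℝ × ℝ → V3) (q : ℝ × ℝ) : V3 :=
  (Real.sqrt (dot3 (cross3 (w1 q) (w2 q)) (cross3 (w1 q) (w2 q))))⁻¹ •
    cross3 (w1 q) (w2 q)

/-- The matrix `I_Ω = Ωᵀ Ω`. -/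
def IOmega (w1 w2 : ℝ × ℝ → V3) (q : ℝ × ℝ) : Matrix (Fin 2) (Fin 2) ℝ :=
  !![dot3 (w1 q) (w1 q), dot3 (w1 q) (w2 q);
     dot3 (w2 q) (w1 q), dot3 (w2 q) (w2 q)]

/-- The matrix `II_Ω`, with `(II_Ω)ᵢⱼ = ⟨(wᵢ)_{uⱼ}, n⟩` for the induced normal `n`. -/
def IIOmega (w1 w2 : ℝ × ℝ → V3) (q : ℝ × ℝ) : Matrix (Fin 2) (Fin 2) ℝ :=
  !![dot3 (pd1 w1 q) (inducedNormal w1 w2 q), dot3 (pd2 w1 q) (inducedNormal w1 w2 q);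
     dot3 (pd1 w2 q) (inducedNormal w1 w2 q), dot3 (pd2 w2 q) (inducedNormal w1 w2 q)]

/-- The Ω-relative curvature `K_Ω = det (−II_Ωᵀ I_Ω⁻¹)`. -/
def relK (w1 w2 : ℝ × ℝ → V3) (q : ℝ × ℝ) : ℝ :=
  (-(IIOmega w1 w2 q)ᵀ * (IOmega w1 w2 q)⁻¹).det

/-- The tangent plane at a regular point, `span{x_{u₁}, x_{u₂}}`. -/
def tangentSpan (x : ℝ × ℝ → V3) (q : ℝ × ℝ) : Submodule ℝ V3 :=
  Submodule.span ℝ {pd1 x q, pd2 x q}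

/-- The Gaussian curvature `K = (eg − f²)/(EG − F²)` w.r.t. the unit normal `n`. -/
def gaussK (x n : ℝ × ℝ → V3) (q : ℝ × ℝ) : ℝ :=
  (dot3 (pd1 (pd1 x) q) (n q) * dot3 (pd2 (pd2 x) q) (n q)
      - dot3 (pd2 (pd1 x) q) (n q) ^ 2) /
    (dot3 (pd1 x q) (pd1 x q) * dot3 (pd2 x q) (pd2 x q)
      - dot3 (pd1 x q) (pd2 x q) ^ 2)

/-- `ξ` is the usual Blaschke normal vector field of `x` on the (regular) set `R`:
`⟨ξ, n⟩ = |K|^{1/4}`, its tangential part `W = ξ − ⟨ξ,n⟩n` is tangent, and `ξ` is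
equiaffine (its partial derivatives are tangent), which encodes `II(W, X) = −X(|K|^{1/4})`. -/
def IsUsualBlaschkeOn (x n ξ : ℝ × ℝ → V3) (R : Set (ℝ × ℝ)) : Prop :=
  ∀ q ∈ R,
    dot3 (ξ q) (n q) = |gaussK x n q| ^ ((4 : ℝ)⁻¹) ∧
    (ξ q - dot3 (ξ q) (n q) • n q ∈ tangentSpan x q) ∧
    pd1 ξ q ∈ tangentSpan x q ∧ pd2 ξ q ∈ tangentSpan x q

/-- `ξ` is the Blaschke vector field of the frontal `x`: a smooth extension to `U` of
the usual Blaschke vector field defined on the regular part `U ∖ Σ(x)`. -/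
def IsBlaschkeField (x n ξ : ℝ × ℝ → V3) (U : Set (ℝ × ℝ)) : Prop :=
  ContDiffOn ℝ (⊤ : ℕ∞) ξ U ∧ IsUsualBlaschkeOn x n ξ (U \ SingSet x U)

/-- Entrywise partial derivative of a matrix-valued map, in the `u₁` direction. -/
def pdMat1 {m n : Type*} (M : ℝ × ℝ → Matrix m n ℝ) (q : ℝ × ℝ) : Matrix m n ℝ :=
  Matrix.of fun i j => pd1 (fun u => M u i j) q

/-- Entrywise partial derivative of a matrix-valued map, in the `u₂` direction. -/
def pdMat2 {m n : Type*} (M : ℝ × ℝ → Matrix m n ℝ) (q : ℝ × ℝ) : Matrix m n ℝ :=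
  Matrix.of fun i j => pd2 (fun u => M u i j) q


section Helpers

private lemma dot3_comm' (v w : V3) : dot3 v w = dot3 w v := by simp only [dot3]; ring

private lemma dot3_smul_left' (r : ℝ) (v w : V3) : dot3 (r • v) w = r * dot3 v w := by
  simp only [dot3, Pi.smul_apply, smul_eq_mul]; ring

private lemma dot3_sub_left' (u v w : V3) : dot3 (u - v) w = dot3 u w - dot3 v w := by
  simp only [dot3, Pi.sub_apply]; ring

private lemma dot3_add_left' (u v w : V3) : dot3 (u + v) w = dot3 u w + dot3 v w := by
  simp only [dot3, Pi.add_apply]; ring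

private lemma dot3_zero_left' (w : V3) : dot3 0 w = 0 := by
  simp [dot3]

private lemma dot3_cross_left1 (a b : V3) : dot3 (cross3 a b) a = 0 := by
  simp only [dot3, cross3, Matrix.cons_val_zero, Matrix.cons_val_one, Matrix.head_cons,
    Matrix.cons_val_two, Matrix.tail_cons]
  ring

private lemma dot3_cross_left2 (a b : V3) : dot3 (cross3 a b) b = 0 := by
  simp only [dot3, cross3, Matrix.cons_val_zero, Matrix.cons_val_one, Matrix.head_cons,
    Matrix.cons_val_two, Matrix.tail_cons]
  ring

private lemma diff_comp' (f : ℝ × ℝ → V3) (q : ℝ × ℝ) (hf : DifferentiableAt ℝ f q) (i : Fin 3) :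
    DifferentiableAt ℝ (fun u => f u i) q :=
  ((ContinuousLinearMap.proj (R := ℝ) (φ := fun _ : Fin 3 => ℝ) i).differentiableAt).comp q hf

private lemma fderiv_apply_comp' {f : ℝ × ℝ → V3} {q : ℝ × ℝ} (hf : DifferentiableAt ℝ f q)
    (i : Fin 3) (v : ℝ × ℝ) :
    fderiv ℝ (fun u => f u i) q v = fderiv ℝ f q v i := by
  have h : (fun u => f u i) = (ContinuousLinearMap.proj (R := ℝ) (φ := fun _ : Fin 3 => ℝ) i) ∘ f := rfl
  rw [h, fderiv_comp q ((ContinuousLinearMap.proj (R := ℝ) (φ := fun _ : Fin 3 => ℝ) i).differentiableAt) hf]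
  simp

private lemma fderiv_dot3' {f g : ℝ × ℝ → V3} {q : ℝ × ℝ} (hf : DifferentiableAt ℝ f q)
    (hg : DifferentiableAt ℝ g q) (v : ℝ × ℝ) :
    fderiv ℝ (fun u => dot3 (f u) (g u)) q v =
      dot3 (fderiv ℝ f q v) (g q) + dot3 (f q) (fderiv ℝ g q v) := by
  have hfi := fun i => diff_comp' f q hf i
  have hgi := fun i => diff_comp' g q hg i
  simp only [dot3]
  rw [fderiv_fun_add (((hfi 0).fun_mul (hgi 0)).fun_add ((hfi 1).fun_mul (hgi 1))) ((hfi 2).fun_mul (hgi 2)),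
    fderiv_fun_add ((hfi 0).fun_mul (hgi 0)) ((hfi 1).fun_mul (hgi 1)),
    fderiv_fun_mul (hfi 0) (hgi 0), fderiv_fun_mul (hfi 1) (hgi 1), fderiv_fun_mul (hfi 2) (hgi 2)]
  simp only [ContinuousLinearMap.add_apply, ContinuousLinearMap.smul_apply, smul_eq_mul,
    fderiv_apply_comp' hf, fderiv_apply_comp' hg]
  ring

private lemma perp_three' {a b v : V3} (h1 : dot3 v a = 0) (h2 : dot3 v b = 0)
    (h3 : dot3 v (cross3 a b) = 0) (hN : dot3 (cross3 a b) (cross3 a b) ≠ 0) : v = 0 := by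
  simp only [dot3, cross3, Matrix.cons_val_zero, Matrix.cons_val_one, Matrix.head_cons,
    Matrix.cons_val_two, Matrix.tail_cons] at h1 h2 h3 hN
  have key : ∀ i, v i * ((a 1 * b 2 - a 2 * b 1) * (a 1 * b 2 - a 2 * b 1) +
      (a 2 * b 0 - a 0 * b 2) * (a 2 * b 0 - a 0 * b 2) +
      (a 0 * b 1 - a 1 * b 0) * (a 0 * b 1 - a 1 * b 0)) = 0 := by
    intro i
    have e0 : v 0 * ((a 1 * b 2 - a 2 * b 1) * (a 1 * b 2 - a 2 * b 1) +
        (a 2 * b 0 - a 0 * b 2) * (a 2 * b 0 - a 0 * b 2) +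
        (a 0 * b 1 - a 1 * b 0) * (a 0 * b 1 - a 1 * b 0)) = 0 := by
      linear_combination (a 1 * b 2 - a 2 * b 1) * h3 +
        ((a 2 * b 0 - a 0 * b 2) * a 2 - (a 0 * b 1 - a 1 * b 0) * a 1) * h2 +
        (-(a 2 * b 0 - a 0 * b 2) * b 2 + (a 0 * b 1 - a 1 * b 0) * b 1) * h1
    have e1 : v 1 * ((a 1 * b 2 - a 2 * b 1) * (a 1 * b 2 - a 2 * b 1) +
        (a 2 * b 0 - a 0 * b 2) * (a 2 * b 0 - a 0 * b 2) +
        (a 0 * b 1 - a 1 * b 0) * (a 0 * b 1 - a 1 * b 0)) = 0 := by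
      linear_combination (a 2 * b 0 - a 0 * b 2) * h3 +
        ((a 0 * b 1 - a 1 * b 0) * a 0 - (a 1 * b 2 - a 2 * b 1) * a 2) * h2 +
        (-(a 0 * b 1 - a 1 * b 0) * b 0 + (a 1 * b 2 - a 2 * b 1) * b 2) * h1
    have e2 : v 2 * ((a 1 * b 2 - a 2 * b 1) * (a 1 * b 2 - a 2 * b 1) +
        (a 2 * b 0 - a 0 * b 2) * (a 2 * b 0 - a 0 * b 2) +
        (a 0 * b 1 - a 1 * b 0) * (a 0 * b 1 - a 1 * b 0)) = 0 := by
      linear_combination (a 0 * b 1 - a 1 * b 0) * h3 +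
        ((a 1 * b 2 - a 2 * b 1) * a 1 - (a 2 * b 0 - a 0 * b 2) * a 0) * h2 +
        (-(a 1 * b 2 - a 2 * b 1) * b 1 + (a 2 * b 0 - a 0 * b 2) * b 0) * h1
    fin_cases i
    · exact e0
    · exact e1
    · exact e2
  funext i
  exact (mul_eq_zero.mp (key i)).resolve_right hN

end Helpers

/-- For a non-parabolic frontal, the affine conormal field `ν` relative
to an equiaffine transversal field `ξ` is an immersion: `ν_{u₁}(q)` and `ν_{u₂}(q)`
are linearly independent at every `q ∈ U`. -/
theorem statement9 (U : Set (ℝ × ℝ)) (x w1 w2 ξ ν : ℝ × ℝ → V3)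
    (hx : ContDiffOn ℝ (⊤ : ℕ∞) x U)
    (hfr : IsFrontal x (inducedNormal w1 w2) U) (hpr : IsProper x U)
    (hΩ : IsTMB x w1 w2 U)
    (hnonpar : ∀ q ∈ U, relK w1 w2 q ≠ 0)
    (hξs : ContDiffOn ℝ (⊤ : ℕ∞) ξ U)
    (hξtrans : ∀ q ∈ U, ξ q ∉ Submodule.span ℝ {w1 q, w2 q})
    (hequiaffine : ∀ q ∈ U, pd1 ξ q ∈ Submodule.span ℝ {w1 q, w2 q} ∧
                            pd2 ξ q ∈ Submodule.span ℝ {w1 q, w2 q})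
    (hνs : ContDiffOn ℝ (⊤ : ℕ∞) ν U) (hν0 : ∀ q ∈ U, ν q ≠ 0)
    (hνξ : ∀ q ∈ U, dot3 (ν q) (ξ q) = 1)
    (hνw : ∀ q ∈ U, dot3 (ν q) (w1 q) = 0 ∧ dot3 (ν q) (w2 q) = 0) :
    ∀ q ∈ U, LinearIndependent ℝ ![pd1 ν q, pd2 ν q] := by
  obtain ⟨hU, hxs2, hns2, hnn, hperpn⟩ := hfr
  obtain ⟨hw1s, hw2s, hwind, hwspan⟩ := hΩ
  intro q hq
  have hmem : U ∈ 𝓝 q := hU.mem_nhds hq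
  have hνd : DifferentiableAt ℝ ν q :=
    (hνs.differentiableOn (by simp)).differentiableAt hmem
  have hw1d : DifferentiableAt ℝ w1 q :=
    (hw1s.differentiableOn (by simp)).differentiableAt hmem
  have hw2d : DifferentiableAt ℝ w2 q :=
    (hw2s.differentiableOn (by simp)).differentiableAt hmem
  set nq := inducedNormal w1 w2 q with hnqdef
  set N := cross3 (w1 q) (w2 q) with hNdef
  set c := (Real.sqrt (dot3 N N))⁻¹ with hcdef
  have hnq : nq = c • N := rfl
  have hone : dot3 nq nq = 1 := hnn q hq
  have hkey : c * c * dot3 N N = 1 := by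
    rw [hnq, dot3_smul_left', dot3_comm' N (c • N), dot3_smul_left'] at hone
    linarith [hone]
  have hNN : dot3 N N ≠ 0 := by
    intro h; rw [h, mul_zero] at hkey; exact one_ne_zero hkey.symm
  have hc0 : c ≠ 0 := by
    intro h; rw [h] at hkey; simp at hkey
  -- ν q is a multiple of the induced normal
  set lam := dot3 (ν q) nq with hlamdef
  have hsub : ∀ w : V3, dot3 (ν q - lam • nq) w = dot3 (ν q) w - lam * dot3 nq w := by
    intro w; rw [dot3_sub_left', dot3_smul_left']
  have hv1 : dot3 (ν q - lam • nq) (w1 q) = 0 := by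
    rw [hsub, (hνw q hq).1, hnq, dot3_smul_left', dot3_cross_left1]
    ring
  have hv2 : dot3 (ν q - lam • nq) (w2 q) = 0 := by
    rw [hsub, (hνw q hq).2, hnq, dot3_smul_left', dot3_cross_left2]
    ring
  have hvn : dot3 (ν q - lam • nq) nq = 0 := by
    rw [hsub, hone, ← hlamdef]; ring
  have hvN : dot3 (ν q - lam • nq) N = 0 := by
    rw [hnq, dot3_comm', dot3_smul_left', dot3_comm' N] at hvn
    exact (mul_eq_zero.mp hvn).resolve_left hc0
  have hveq : ν q = lam • nq := by
    have := perp_three' hv1 hv2 (by rwa [← hNdef]) (by rwa [← hNdef])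
    rwa [sub_eq_zero] at this
  have hlam0 : lam ≠ 0 := by
    intro h
    exact hν0 q hq (by rw [hveq, h, zero_smul])
  -- derivative identities
  have deriv_eq : ∀ (w : ℝ × ℝ → V3), DifferentiableAt ℝ w q →
      (∀ u ∈ U, dot3 (ν u) (w u) = 0) →
      ∀ v : ℝ × ℝ, dot3 (fderiv ℝ ν q v) (w q) = - dot3 (ν q) (fderiv ℝ w q v) := by
    intro w hwd hz v
    have hEq : (fun u => dot3 (ν u) (w u)) =ᶠ[𝓝 q] (fun _ => (0 : ℝ)) := by
      filter_upwards [hmem] with u hu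
      exact hz u hu
    have h0 : fderiv ℝ (fun u => dot3 (ν u) (w u)) q = 0 := by
      rw [hEq.fderiv_eq]; exact fderiv_const_apply 0
    have hd := fderiv_dot3' hνd hwd v
    rw [h0] at hd
    simp only [ContinuousLinearMap.zero_apply] at hd
    linarith [hd]
  have E11 : dot3 (pd1 ν q) (w1 q) = - (lam * dot3 (pd1 w1 q) nq) := by
    rw [show pd1 ν q = fderiv ℝ ν q (1, 0) from rfl,
      deriv_eq w1 hw1d (fun u hu => (hνw u hu).1) (1, 0), hveq, dot3_smul_left',
      dot3_comm' nq]
    rfl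
  have E12 : dot3 (pd2 ν q) (w1 q) = - (lam * dot3 (pd2 w1 q) nq) := by
    rw [show pd2 ν q = fderiv ℝ ν q (0, 1) from rfl,
      deriv_eq w1 hw1d (fun u hu => (hνw u hu).1) (0, 1), hveq, dot3_smul_left',
      dot3_comm' nq]
    rfl
  have E21 : dot3 (pd1 ν q) (w2 q) = - (lam * dot3 (pd1 w2 q) nq) := by
    rw [show pd1 ν q = fderiv ℝ ν q (1, 0) from rfl,
      deriv_eq w2 hw2d (fun u hu => (hνw u hu).2) (1, 0), hveq, dot3_smul_left',
      dot3_comm' nq]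
    rfl
  have E22 : dot3 (pd2 ν q) (w2 q) = - (lam * dot3 (pd2 w2 q) nq) := by
    rw [show pd2 ν q = fderiv ℝ ν q (0, 1) from rfl,
      deriv_eq w2 hw2d (fun u hu => (hνw u hu).2) (0, 1), hveq, dot3_smul_left',
      dot3_comm' nq]
    rfl
  -- the determinant of II is nonzero
  set A := dot3 (pd1 w1 q) nq with hA
  set B := dot3 (pd2 w1 q) nq with hB
  set C := dot3 (pd1 w2 q) nq with hC
  set D := dot3 (pd2 w2 q) nq with hD
  have hdet : A * D - B * C ≠ 0 := by
    intro h
    apply hnonpar q hq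
    unfold relK
    rw [Matrix.det_mul]
    have h2 : (-(IIOmega w1 w2 q)ᵀ).det = 0 := by
      rw [Matrix.det_neg, Matrix.det_transpose]
      have : (IIOmega w1 w2 q).det = A * D - B * C := by
        unfold IIOmega
        rw [Matrix.det_fin_two_of]
      rw [this, h, mul_zero]
    rw [h2, zero_mul]
  rw [LinearIndependent.pair_iff]
  intro s t hst
  have row : ∀ w : V3, s * dot3 (pd1 ν q) w + t * dot3 (pd2 ν q) w = 0 := by
    intro w
    calc s * dot3 (pd1 ν q) w + t * dot3 (pd2 ν q) w
        = dot3 (s • pd1 ν q + t • pd2 ν q) w := by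
          rw [dot3_add_left', dot3_smul_left', dot3_smul_left']
      _ = 0 := by rw [hst, dot3_zero_left']
  have row1 := row (w1 q)
  have row2 := row (w2 q)
  rw [E11, E12] at row1
  rw [E21, E22] at row2
  have row1' : s * A + t * B = 0 := by
    have hm : lam * (s * A + t * B) = 0 := by linear_combination -row1
    exact (mul_eq_zero.mp hm).resolve_left hlam0
  have row2' : s * C + t * D = 0 := by
    have hm : lam * (s * C + t * D) = 0 := by linear_combination -row2
    exact (mul_eq_zero.mp hm).resolve_left hlam0
  have hs : s * (A * D - B * C) = 0 := by linear_combination D * row1' - B * row2'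
  have ht : t * (A * D - B * C) = 0 := by linear_combination -C * row1' + A * row2'
  exact ⟨(mul_eq_zero.mp hs).resolve_right hdet, (mul_eq_zero.mp ht).resolve_right hdet⟩


end
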